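/- arXiv:2411.04212 — 2 statements merged into one kernel-verified Lean document; each statement's English description precedes it below -/
import Mathlib

section
/- The rotation R_θ of ℝ² by angle θ is cyclically monotone (n-monotone for all n ≥ 2) if and only if θ = 0. -/
/-!
The identity is cyclically monotone because `⟨x - y, x⟩ ≥ (‖x‖² - ‖y‖²) / 2`, and the right-hand
sides telescope to `0` around a cycle. For `0 < |θ| ≤ π`, go around the regular `n`-gon inscribed
in the unit circle, turning in the direction of `θ` by `c = ±2π/n` at each step: every term of the
cyclic sum equals `cos θ - cos (c - θ)`, which is negative as soon as `2π/n < 2|θ|`, since then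
`|c - θ| < |θ| ≤ π`.
-/

/-- Counterclockwise rotation of `ℝ²` by angle `θ`. -/
noncomputable def rot (θ : ℝ) (x : ℝ × ℝ) : ℝ × ℝ :=
  (x.1 * Real.cos θ - x.2 * Real.sin θ, x.1 * Real.sin θ + x.2 * Real.cos θ)

/-- The Euclidean inner product on `ℝ²`. -/
def dot (a b : ℝ × ℝ) : ℝ := a.1 * b.1 + a.2 * b.2

open Real Finset

def CyclicallyMonotone (T : ℝ × ℝ → ℝ × ℝ) : Prop :=
  ∀ n : ℕ, 2 ≤ n → ∀ p : ℕ → ℝ × ℝ, p (n + 1) = p 1 →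
    0 ≤ ∑ i ∈ Icc 1 n, dot (p i - p (i + 1)) (T (p i))

lemma rot_zero : rot 0 = id := by
  funext x
  simp [rot]

lemma dot_self_sub_dot_self_le (x y : ℝ × ℝ) : dot x x - dot y y ≤ 2 * dot (x - y) x := by
  simp only [dot, Prod.fst_sub, Prod.snd_sub]
  nlinarith [sq_nonneg (x.1 - y.1), sq_nonneg (x.2 - y.2)]

theorem cyclicallyMonotone_id : CyclicallyMonotone id := by
  intro n hn p hp
  have htelescope : ∑ i ∈ Icc 1 n, (dot (p (i + 1)) (p (i + 1)) - dot (p i) (p i)) = 0 := by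
    rw [sum_Icc_sub (f := fun i => dot (p i) (p i)) (by omega), hp, sub_self]
  have hle : ∑ i ∈ Icc 1 n, (dot (p i) (p i) - dot (p (i + 1)) (p (i + 1)))
      ≤ ∑ i ∈ Icc 1 n, 2 * dot (p i - p (i + 1)) (p i) :=
    sum_le_sum fun i _ => dot_self_sub_dot_self_le _ _
  rw [← mul_sum] at hle
  simp only [sum_sub_distrib] at htelescope hle
  simp only [id]
  linarith

noncomputable def circlePolygon (c : ℝ) (i : ℕ) : ℝ × ℝ := (cos (c * i), sin (c * i))

lemma circlePolygon_succ_eq_one {c : ℝ} {n : ℕ} {k : ℤ} (hc : c * n = k * (2 * π)) :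
    circlePolygon c (n + 1) = circlePolygon c 1 := by
  have hangle : c * ((n + 1 : ℕ) : ℝ) = c + k * (2 * π) := by push_cast; rw [← hc]; ring
  simp only [circlePolygon, hangle, cos_add_int_mul_two_pi, sin_add_int_mul_two_pi,
    Nat.cast_one, mul_one]

lemma dot_circlePolygon_sub_rot (θ c : ℝ) (i : ℕ) :
    dot (circlePolygon c i - circlePolygon c (i + 1)) (rot θ (circlePolygon c i))
      = cos θ - cos (c - θ) := by
  have hangle : c * ((i + 1 : ℕ) : ℝ) = c * i + c := by push_cast; ring
  simp only [circlePolygon, hangle, dot, rot, Prod.fst_sub, Prod.snd_sub, cos_add, sin_add,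
    cos_sub]
  linear_combination (cos θ - cos c * cos θ - sin c * sin θ) * sin_sq_add_cos_sq (c * i)

lemma CyclicallyMonotone.cos_sub_le {θ c : ℝ} (h : CyclicallyMonotone (rot θ)) {n : ℕ}
    (hn : 2 ≤ n) {k : ℤ} (hc : c * n = k * (2 * π)) : cos (c - θ) ≤ cos θ := by
  have hsum := h n hn (circlePolygon c) (circlePolygon_succ_eq_one hc)
  simp only [dot_circlePolygon_sub_rot, sum_const, Nat.card_Icc, add_tsub_cancel_right,
    nsmul_eq_mul] at hsum
  have hn0 : (0 : ℝ) < n := by positivity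
  nlinarith

lemma CyclicallyMonotone.cos_two_pi_div_sub_abs_le {θ : ℝ} (h : CyclicallyMonotone (rot θ))
    {n : ℕ} (hn : 2 ≤ n) : cos (2 * π / n - |θ|) ≤ cos θ := by
  have hn0 : (n : ℝ) ≠ 0 := by positivity
  rcases abs_cases θ with ⟨habs, _⟩ | ⟨habs, _⟩
  · rw [habs]
    exact h.cos_sub_le hn (k := 1) (by field_simp; ring)
  · rw [habs, ← cos_neg, show -(2 * π / n - -θ) = -(2 * π / n) - θ by ring]
    exact h.cos_sub_le hn (k := -1) (by field_simp; push_cast; ring)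

lemma exists_cos_lt_cos_two_pi_div_sub {t : ℝ} (ht : 0 < t) (htπ : t ≤ π) :
    ∃ n : ℕ, 2 ≤ n ∧ cos t < cos (2 * π / n - t) := by
  obtain ⟨n, hn⟩ := exists_nat_gt (max 2 (π / t))
  have hn2 : (2 : ℝ) < n := (le_max_left _ _).trans_lt hn
  have hnpos : (0 : ℝ) < n := by linarith
  have hstep_pos : 0 < 2 * π / n := by positivity
  have hstep_lt : 2 * π / n < 2 * t := by
    rw [div_lt_iff₀ hnpos]
    have := (div_lt_iff₀ ht).mp ((le_max_right _ _).trans_lt hn)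
    linarith
  have habs : |2 * π / n - t| < t := by rw [abs_lt]; constructor <;> linarith
  refine ⟨n, by exact_mod_cast hn2.le, ?_⟩
  rw [← cos_abs (2 * π / n - t)]
  exact strictAntiOn_cos ⟨abs_nonneg _, by linarith⟩ ⟨ht.le, htπ⟩ habs

/-- The rotation `R_θ` (with `θ ∈ [-π, π]`) is cyclically monotone iff `θ = 0`. -/
theorem rotation_cyclically_monotone_iff (θ : ℝ)
    (hθ : θ ∈ Set.Icc (-Real.pi) Real.pi) :
    (∀ n : ℕ, 2 ≤ n → ∀ p : ℕ → ℝ × ℝ, p (n + 1) = p 1 →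
        0 ≤ ∑ i ∈ Finset.Icc 1 n, dot (p i - p (i + 1)) (rot θ (p i)))
      ↔ θ = 0 := by
  refine ⟨fun h => ?_, ?_⟩
  · change CyclicallyMonotone (rot θ) at h
    by_contra hθ0
    obtain ⟨n, hn, hlt⟩ :=
      exists_cos_lt_cos_two_pi_div_sub (abs_pos.mpr hθ0) (abs_le.mpr hθ)
    have hle := h.cos_two_pi_div_sub_abs_le hn
    rw [cos_abs] at hlt
    linarith
  · rintro rfl
    rw [rot_zero]
    exact cyclicallyMonotone_id
end

section
/- Let (X, Y, ⟨·,·⟩) be a dual pairing, T ⊆ X × Y, and K_T ⊆ (X×Y) × (X×Y) defined by ((x,y),(u,v)) ∈ K_T iff (x,v) ∈ T and (u,y) ∈ T. For n ≥ 2, T is n-monotone in (X,Y,⟨·,·⟩) if and only if K_T is n-monotone in (Z,Z,·), where Z = X×Y and z·w = ⟨x,v⟩ + ⟨u,y⟩ for z=(x,y), w=(u,v). -/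
variable {X Y : Type*} [AddCommGroup X] [Module ℝ X] [AddCommGroup Y] [Module ℝ Y]

/-- The operator `K_T : Z ⇒ Z`, `Z = X × Y`: `((x,y),(u,v)) ∈ K_T` iff
`(x,v) ∈ T` and `(u,y) ∈ T`. -/
def KGraph (T : Set (X × Y)) : Set ((X × Y) × (X × Y)) :=
  {p | (p.1.1, p.2.2) ∈ T ∧ (p.2.1, p.1.2) ∈ T}

/-!
Splitting `(z_i - z_{i+1}) · w_i` into its two components, the `n`-monotonicity sum of a cycle in
`K_T` is a monotonicity sum of a cycle in `T` plus a sum `∑ ⟨u_i, y_i - y_{i+1}⟩` over another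
cycle in `T`. Summation by parts turns the latter into the monotonicity sum of the same cycle
traversed backwards. Hence `K_T` inherits `n`-monotonicity from `T`; conversely, pairing a cycle
of `T` with its own reversal gives a cycle of `K_T` whose sum is twice the sum of the cycle.
-/

open Finset

theorem Finset.sum_Icc_one_reflect {M : Type*} [AddCommMonoid M] (f : ℕ → M) (n : ℕ) :
    ∑ i ∈ Icc 1 n, f (n + 1 - i) = ∑ i ∈ Icc 1 n, f i :=
  sum_nbij' (fun i => n + 1 - i) (fun i => n + 1 - i) (by simp; omega) (by simp; omega)
    (by simp; omega) (by simp; omega) (fun _ _ => rfl)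

section CycleReverse

variable {α : Type*}

/-- The cycle `p 1, p n, p (n - 1), …, p 2, p 1`, i.e. `p` traversed backwards. -/
def cycleReverse (n : ℕ) (p : ℕ → α) : ℕ → α :=
  fun i => p (n + 2 - i)

theorem cycleReverse_succ_eq_one {n : ℕ} {p : ℕ → α} (hp : p (n + 1) = p 1) :
    cycleReverse n p (n + 1) = cycleReverse n p 1 := by
  simp only [cycleReverse, show n + 2 - (n + 1) = 1 by omega, show n + 2 - 1 = n + 1 by omega, hp]

theorem cycleReverse_mem {n : ℕ} {p : ℕ → α} {S : Set α} (hS : ∀ i ∈ Icc 1 n, p i ∈ S)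
    (hp : p (n + 1) = p 1) : ∀ i ∈ Icc 1 n, cycleReverse n p i ∈ S := by
  intro i hi
  rw [mem_Icc] at hi
  obtain rfl | hi1 := eq_or_lt_of_le hi.1
  · simpa only [cycleReverse, show n + 2 - 1 = n + 1 by omega, hp] using hS 1 (by simp; omega)
  · exact hS _ (by simp; omega)

theorem sum_cycleReverse {M : Type*} [AddCommMonoid M] (g : α → α → M) (n : ℕ) (p : ℕ → α) :
    ∑ i ∈ Icc 1 n, g (cycleReverse n p i) (cycleReverse n p (i + 1)) =
      ∑ i ∈ Icc 1 n, g (p (i + 1)) (p i) := by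
  refine (sum_congr rfl fun i hi => ?_).trans
    (sum_Icc_one_reflect (fun i => g (p (i + 1)) (p i)) n)
  rw [mem_Icc] at hi
  simp only [cycleReverse, show n + 2 - i = n + 1 - i + 1 by omega,
    show n + 2 - (i + 1) = n + 1 - i by omega]

end CycleReverse

section CyclicSum

variable {R E F M : Type*} [CommRing R] [AddCommGroup E] [Module R E] [AddCommGroup F]
  [Module R F] [AddCommGroup M] [Module R M]

def cyclicSum (c : E →ₗ[R] F →ₗ[R] M) (n : ℕ) (p : ℕ → E × F) : M :=
  ∑ i ∈ Icc 1 n, c ((p i).1 - (p (i + 1)).1) (p i).2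

def dualCyclicSum (c : E →ₗ[R] F →ₗ[R] M) (n : ℕ) (p : ℕ → E × F) : M :=
  ∑ i ∈ Icc 1 n, c (p i).1 ((p i).2 - (p (i + 1)).2)

theorem cyclicSum_eq_sum_apply_succ_sub (c : E →ₗ[R] F →ₗ[R] M) {n : ℕ} {p : ℕ → E × F}
    (hp : p (n + 1) = p 1) :
    cyclicSum c n p = ∑ i ∈ Icc 1 n, c (p (i + 1)).1 ((p (i + 1)).2 - (p i).2) := by
  have telescope : ∑ i ∈ Icc 1 n, (c (p (i + 1)).1 (p (i + 1)).2 - c (p i).1 (p i).2) = 0 := by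
    rw [← Ico_add_one_right_eq_Icc, sum_Ico_sub (fun i => c (p i).1 (p i).2) (by omega), hp,
      sub_self]
  rw [cyclicSum, ← sub_eq_zero, ← sum_sub_distrib, ← neg_eq_zero, ← telescope,
    ← sum_neg_distrib]
  refine sum_congr rfl fun i _ => ?_
  simp only [map_sub, LinearMap.sub_apply]
  abel

theorem cyclicSum_eq_dualCyclicSum_cycleReverse (c : E →ₗ[R] F →ₗ[R] M) {n : ℕ}
    {p : ℕ → E × F} (hp : p (n + 1) = p 1) :
    cyclicSum c n p = dualCyclicSum c n (cycleReverse n p) := by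
  rw [cyclicSum_eq_sum_apply_succ_sub c hp]
  exact (sum_cycleReverse (fun a a' => c a.1 (a.2 - a'.2)) n p).symm

theorem dualCyclicSum_eq_cyclicSum_cycleReverse (c : E →ₗ[R] F →ₗ[R] M) {n : ℕ}
    {p : ℕ → E × F} (hp : p (n + 1) = p 1) :
    dualCyclicSum c n p = cyclicSum c n (cycleReverse n p) := by
  rw [cyclicSum_eq_sum_apply_succ_sub c (cycleReverse_succ_eq_one hp)]
  exact (sum_cycleReverse (fun a' a => c a.1 (a.2 - a'.2)) n p).symm

end CyclicSum

def IsNMonotone {E F : Type*} [AddCommGroup E] [Module ℝ E] [AddCommGroup F] [Module ℝ F]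
    (c : E →ₗ[ℝ] F →ₗ[ℝ] ℝ) (n : ℕ) (S : Set (E × F)) : Prop :=
  ∀ p : ℕ → E × F, (∀ i ∈ Icc 1 n, p i ∈ S) → p (n + 1) = p 1 → 0 ≤ cyclicSum c n p

/-- The pairing `(x, y) · (u, v) = ⟨x, v⟩ + ⟨u, y⟩` on `Z = X × Y`. -/
def crossPairing (b : X →ₗ[ℝ] Y →ₗ[ℝ] ℝ) : (X × Y) →ₗ[ℝ] (X × Y) →ₗ[ℝ] ℝ :=
  b.compl₁₂ (LinearMap.fst ℝ X Y) (LinearMap.snd ℝ X Y) +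
    b.flip.compl₁₂ (LinearMap.snd ℝ X Y) (LinearMap.fst ℝ X Y)

theorem cyclicSum_crossPairing (b : X →ₗ[ℝ] Y →ₗ[ℝ] ℝ) (n : ℕ) (P : ℕ → (X × Y) × (X × Y)) :
    cyclicSum (crossPairing b) n P =
      cyclicSum b n (fun i => ((P i).1.1, (P i).2.2)) +
        dualCyclicSum b n (fun i => ((P i).2.1, (P i).1.2)) := by
  simp only [cyclicSum, dualCyclicSum, ← sum_add_distrib]
  rfl

theorem isNMonotone_crossPairing_kGraph_iff (b : X →ₗ[ℝ] Y →ₗ[ℝ] ℝ) (n : ℕ) (T : Set (X × Y)) :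
    IsNMonotone (crossPairing b) n (KGraph T) ↔ IsNMonotone b n T := by
  constructor
  · intro hK p hp hcyc
    set q := cycleReverse n p
    have hsum := hK (fun i => (((p i).1, (q i).2), ((q i).1, (p i).2)))
      (fun i hi => ⟨hp i hi, cycleReverse_mem hp hcyc i hi⟩)
      (by simp only [hcyc, q, cycleReverse_succ_eq_one hcyc])
    rw [cyclicSum_crossPairing, ← cyclicSum_eq_dualCyclicSum_cycleReverse b hcyc] at hsum
    linarith
  · intro hT P hP hcyc
    rw [cyclicSum_crossPairing]
    have hy : ((P (n + 1)).2.1, (P (n + 1)).1.2) = ((P 1).2.1, (P 1).1.2) := by rw [hcyc]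
    refine add_nonneg (hT _ (fun i hi => (hP i hi).1) (by rw [hcyc])) ?_
    rw [dualCyclicSum_eq_cyclicSum_cycleReverse b hy]
    exact hT _ (cycleReverse_mem (fun i hi => (hP i hi).2) hy) (cycleReverse_succ_eq_one hy)

theorem nMono_iff_nMono_KGraph_general (b : X →ₗ[ℝ] Y →ₗ[ℝ] ℝ) (T : Set (X × Y))
    (n : ℕ) :
    (∀ p : ℕ → X × Y, (∀ i ∈ Finset.Icc 1 n, p i ∈ T) → p (n + 1) = p 1 →
        0 ≤ ∑ i ∈ Finset.Icc 1 n, b ((p i).1 - (p (i + 1)).1) (p i).2)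
      ↔ (∀ P : ℕ → (X × Y) × (X × Y),
          (∀ i ∈ Finset.Icc 1 n, P i ∈ KGraph T) → P (n + 1) = P 1 →
          0 ≤ ∑ i ∈ Finset.Icc 1 n,
            (b ((P i).1.1 - (P (i + 1)).1.1) (P i).2.2
              + b (P i).2.1 ((P i).1.2 - (P (i + 1)).1.2))) :=
  (isNMonotone_crossPairing_kGraph_iff b n T).symm

/-- For `n ≥ 2`, `T` is `n`-monotone in `(X, Y, ⟨·,·⟩)` iff `K_T` is `n`-monotone
in `(Z, Z, ·)` where `z·w = ⟨x,v⟩ + ⟨u,y⟩`. -/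
theorem nMono_iff_nMono_KGraph (b : X →ₗ[ℝ] Y →ₗ[ℝ] ℝ) (T : Set (X × Y))
    (n : ℕ) (hn : 2 ≤ n) :
    (∀ p : ℕ → X × Y, (∀ i ∈ Finset.Icc 1 n, p i ∈ T) → p (n + 1) = p 1 →
        0 ≤ ∑ i ∈ Finset.Icc 1 n, b ((p i).1 - (p (i + 1)).1) (p i).2)
      ↔ (∀ P : ℕ → (X × Y) × (X × Y),
          (∀ i ∈ Finset.Icc 1 n, P i ∈ KGraph T) → P (n + 1) = P 1 →
          0 ≤ ∑ i ∈ Finset.Icc 1 n,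
            (b ((P i).1.1 - (P (i + 1)).1.1) (P i).2.2
              + b (P i).2.1 ((P i).1.2 - (P (i + 1)).1.2))) :=
  nMono_iff_nMono_KGraph_general b T n
end
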